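/- For every integer m ≥ 1, the kernel of the ℝ-linear map T_m : H^ℝ_{m+2} × H^ℝ_{m+1} → H_m, T_m(f, φ) = D²f − 2Dφ, has real dimension exactly 3. -/

import Mathlib

open MvPolynomial Finsupp

-- decompose a Fin 2 finsupp
lemma fin2_decomp (d : Fin 2 →₀ ℕ) : d = single 0 (d 0) + single 1 (d 1) := by
  ext x
  fin_cases x <;> simp

lemma single_add_single_eq (a b a' b' : ℕ) :
    (single (0 : Fin 2) a + single 1 b = single 0 a' + single 1 b') ↔ a = a' ∧ b = b' := by
  constructor
  · intro h
    constructor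
    · have := congrFun (congrArg (fun f : Fin 2 →₀ ℕ => (f : Fin 2 → ℕ)) h) 0
      simpa using this
    · have := congrFun (congrArg (fun f : Fin 2 →₀ ℕ => (f : Fin 2 → ℕ)) h) 1
      simpa using this
  · rintro ⟨rfl, rfl⟩; rfl

lemma degree_fin2 (d : Fin 2 →₀ ℕ) : d.degree = d 0 + d 1 := by
  rw [Finsupp.degree_apply,
    Finset.sum_subset (Finset.subset_univ d.support)
      (fun x _ hx => Finsupp.notMem_support_iff.mp hx),
    Fin.sum_univ_two]

lemma degree_ss (a b : ℕ) : (single (0:Fin 2) a + single 1 b).degree = a + b := by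
  rw [degree_fin2]; simp

/-- `H^ℝ_k`: the real-linear subspace of homogeneous polynomials of degree `k`
in the two variables `z, w` (here `w` plays the role of `z̄`) whose coefficients
satisfy `a_{ij} = conj a_{ji}`; these are the polynomials taking real values
when `w = z̄`. -/
noncomputable def HR (k : ℕ) : Submodule ℝ (MvPolynomial (Fin 2) ℂ) where
  carrier := {p | p.IsHomogeneous k ∧
    ∀ i j : ℕ, coeff (Finsupp.single 0 i + Finsupp.single 1 j) p =
      starRingEnd ℂ (coeff (Finsupp.single 0 j + Finsupp.single 1 i) p)}
  add_mem' := by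
    rintro p q ⟨hp1, hp2⟩ ⟨hq1, hq2⟩
    refine ⟨hp1.add hq1, fun i j => ?_⟩
    simp only [coeff_add, map_add, hp2 i j, hq2 i j]
  zero_mem' := by
    refine ⟨isHomogeneous_zero _ _ _, fun i j => by simp⟩
  smul_mem' := by
    rintro r p ⟨hp1, hp2⟩
    refine ⟨fun {d} hd => hp1 (fun h => hd ?_), fun i j => ?_⟩
    · rw [coeff_smul, h, smul_zero]
    · rw [coeff_smul, coeff_smul, hp2 i j]
      simp [Complex.real_smul, map_mul, Complex.conj_ofReal]

/-- The ℝ-linear map `T_m(f, φ) = D²f − 2Dφ`, where `D = ∂/∂z`, defined on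
`H^ℝ_{m+2} × H^ℝ_{m+1}` (with values a priori in the whole polynomial ring;
they in fact lie in `H_m`). -/
noncomputable def Tm (m : ℕ) :
    (HR (m + 2) × HR (m + 1)) →ₗ[ℝ] MvPolynomial (Fin 2) ℂ where
  toFun p := pderiv 0 (pderiv 0 (p.1 : MvPolynomial (Fin 2) ℂ))
    - 2 * pderiv 0 ((p.2 : MvPolynomial (Fin 2) ℂ))
  map_add' p q := by
    simp only [Prod.fst_add, Prod.snd_add, Submodule.coe_add, map_add]
    ring
  map_smul' r p := by
    have h : ∀ q : MvPolynomial (Fin 2) ℂ,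
        r • q = C ((algebraMap ℝ ℂ) r) * q := fun q => by
      rw [algebra_compatible_smul ℂ r q, smul_eq_C_mul]
    simp only [Prod.smul_fst, Prod.smul_snd, Submodule.coe_smul,
      RingHom.id_apply, h, pderiv_C_mul]
    ring


-- coefficient of pderiv
lemma coeff_pderiv (i : Fin 2) (d : Fin 2 →₀ ℕ) (p : MvPolynomial (Fin 2) ℂ) :
    coeff d (pderiv i p) = ((d i : ℂ) + 1) * coeff (d + single i 1) p := by
  induction p using MvPolynomial.induction_on' with
  | monomial s a =>
    rw [pderiv_monomial, coeff_monomial, coeff_monomial]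
    rcases Nat.eq_zero_or_pos (s i) with hs | hs
    · have h1 : ¬ (s = d + single i 1) := by
        intro h
        have := congrFun (congrArg (fun f : Fin 2 →₀ ℕ => (f : Fin 2 → ℕ)) h) i
        simp [hs] at this
      rw [if_neg h1, mul_zero]
      split_ifs <;> simp [hs]
    · have hle : single i 1 ≤ s := by
        intro x
        rcases eq_or_ne x i with rfl | hx
        · simpa using Nat.succ_le_of_lt hs
        · simp [Finsupp.single_apply, Ne.symm hx]
      have key : s - single i 1 = d ↔ s = d + single i 1 := by
        rw [tsub_eq_iff_eq_add_of_le hle]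
      by_cases h : s = d + single i 1
      · rw [if_pos (key.mpr h), if_pos h]
        have : s i = d i + 1 := by
          have := congrFun (congrArg (fun f : Fin 2 →₀ ℕ => (f : Fin 2 → ℕ)) h) i
          simpa using this
        rw [this]
        push_cast; ring
      · rw [if_neg (fun hh => h (key.mp hh)), if_neg h, mul_zero]
  | add p q hp hq =>
    simp [map_add, coeff_add, hp, hq]
    ring

lemma coeff_pz (k i j : ℕ) :
    coeff (single 0 i + single 1 j) ((X 0 : MvPolynomial (Fin 2) ℂ) ^ k) =
      if i = k ∧ j = 0 then 1 else 0 := by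
  rw [X_pow_eq_monomial, show (single (0:Fin 2) k) = single 0 k + single 1 0 by simp,
    coeff_monomial]
  simp only [single_add_single_eq]
  split_ifs with h1 h2 h2 <;> first | rfl | omega

lemma coeff_pw (k i j : ℕ) :
    coeff (single 0 i + single 1 j) ((X 1 : MvPolynomial (Fin 2) ℂ) ^ k) =
      if i = 0 ∧ j = k then 1 else 0 := by
  rw [X_pow_eq_monomial, show (single (1:Fin 2) k) = single 0 0 + single 1 k by simp,
    coeff_monomial]
  simp only [single_add_single_eq]
  split_ifs with h1 h2 h2 <;> first | rfl | omega

lemma coeff_ps (k i j : ℕ) :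
    coeff (single 0 i + single 1 j) ((X 0 + X 1 : MvPolynomial (Fin 2) ℂ) ^ k) =
      if i + j = k then (k.choose i : ℂ) else 0 := by
  rw [add_pow, coeff_sum]
  have hterm : ∀ t, (X 0 : MvPolynomial (Fin 2) ℂ) ^ t * X 1 ^ (k - t) * (k.choose t : MvPolynomial (Fin 2) ℂ)
      = monomial (single 0 t + single 1 (k - t)) ((k.choose t : ℂ)) := by
    intro t
    rw [X_pow_eq_monomial, X_pow_eq_monomial, monomial_mul, one_mul,
      show ((k.choose t : ℕ) : MvPolynomial (Fin 2) ℂ) = C ((k.choose t : ℕ) : ℂ) by push_cast; rfl,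
      C_apply, monomial_mul, add_zero, one_mul]
  simp only [hterm, coeff_monomial, single_add_single_eq]
  by_cases hij : i + j = k
  · rw [Finset.sum_eq_single i]
    · rw [if_pos ⟨rfl, by omega⟩, if_pos hij]
    · intro b _ hb
      rw [if_neg (fun h => hb h.1)]
    · intro h
      exact absurd (Finset.mem_range.mpr (by omega)) h
  · rw [if_neg hij]
    apply Finset.sum_eq_zero
    intro t ht
    rw [Finset.mem_range] at ht
    rw [if_neg (fun h => hij (by omega))]

lemma pd_z_pow (n : ℕ) : pderiv (0 : Fin 2) ((X 0 : MvPolynomial (Fin 2) ℂ) ^ (n+1)) =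
    C (((n+1:ℕ) :ℂ)) * X 0 ^ n := by
  rw [pderiv_pow, pderiv_X_self, mul_one, Nat.add_sub_cancel,
    map_natCast (C : ℂ →+* MvPolynomial (Fin 2) ℂ) (n+1)]

lemma pd_w_pow (n : ℕ) : pderiv (0 : Fin 2) ((X 1 : MvPolynomial (Fin 2) ℂ) ^ n) = 0 := by
  rw [pderiv_pow, pderiv_X_of_ne (by decide : (1 : Fin 2) ≠ 0), mul_zero]

lemma pd_s_pow (n : ℕ) : pderiv (0 : Fin 2) ((X 0 + X 1 : MvPolynomial (Fin 2) ℂ) ^ (n+1)) =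
    C (((n+1:ℕ) :ℂ)) * (X 0 + X 1) ^ n := by
  rw [pderiv_pow, map_add, pderiv_X_self, pderiv_X_of_ne (by decide : (1 : Fin 2) ≠ 0),
    add_zero, mul_one, Nat.add_sub_cancel,
    map_natCast (C : ℂ →+* MvPolynomial (Fin 2) ℂ) (n+1)]

lemma ssadd (k l : ℕ) : (single (0:Fin 2) k + single 1 l) + single 0 1
    = single 0 (k+1) + single 1 l := by
  ext x; fin_cases x <;> simp

lemma ss_apply0 (k l : ℕ) : (single (0:Fin 2) k + single 1 l : Fin 2 →₀ ℕ) 0 = k := by simp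

lemma mem_HR_pair (k : ℕ) (c : ℂ) :
    C c * X 1 ^ k + C (starRingEnd ℂ c) * X 0 ^ k ∈ HR k := by
  refine ⟨?_, ?_⟩
  · have h1 : ((X 1 : MvPolynomial (Fin 2) ℂ) ^ k).IsHomogeneous k := by
      simpa using (isHomogeneous_X ℂ (1 : Fin 2)).pow k
    have h0 : ((X 0 : MvPolynomial (Fin 2) ℂ) ^ k).IsHomogeneous k := by
      simpa using (isHomogeneous_X ℂ (0 : Fin 2)).pow k
    exact (h1.C_mul c).add (h0.C_mul _)
  · intro i j
    simp only [coeff_add, coeff_C_mul, coeff_pz, coeff_pw, map_add, map_mul]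
    split_ifs <;>
      first
        | omega
        | (simp only [map_one, map_zero, Complex.conj_conj, mul_one, mul_zero,
            zero_mul, add_zero, zero_add]; try ring)

lemma mem_HR_ps (k : ℕ) (r : ℝ) :
    C (r : ℂ) * (X 0 + X 1) ^ k ∈ HR k := by
  refine ⟨?_, ?_⟩
  · have h : ((X 0 + X 1 : MvPolynomial (Fin 2) ℂ)).IsHomogeneous 1 :=
      (isHomogeneous_X ℂ (0 : Fin 2)).add (isHomogeneous_X ℂ (1 : Fin 2))
    have h2 : ((X 0 + X 1 : MvPolynomial (Fin 2) ℂ) ^ k).IsHomogeneous k := by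
      simpa using h.pow k
    exact h2.C_mul r
  · intro i j
    simp only [coeff_C_mul, coeff_ps, map_mul]
    by_cases hij : i + j = k
    · rw [if_pos hij, if_pos (by omega)]
      have : k.choose j = k.choose i := by
        rw [show j = k - i by omega, Nat.choose_symm (by omega)]
      rw [this]
      simp [Complex.conj_ofReal]
    · rw [if_neg hij, if_neg (by omega)]
      simp

lemma inj_aux (m : ℕ) (f φ : MvPolynomial (Fin 2) ℂ)
    (hf : f ∈ HR (m+2)) (hφ : φ ∈ HR (m+1))
    (hker : pderiv 0 (pderiv 0 f) - 2 * pderiv 0 φ = 0)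
    (h0 : coeff (single 0 0 + single 1 (m+2)) f = 0)
    (h1 : (coeff (single 0 1 + single 1 (m+1)) f).re = 0) :
    f = 0 ∧ φ = 0 := by
  obtain ⟨hfh, hfc⟩ := hf
  obtain ⟨hφh, hφc⟩ := hφ
  -- the basic coefficient relation from the kernel equation
  have key : ∀ k l : ℕ, ((k:ℂ)+2) * coeff (single 0 (k+2) + single 1 l) f =
      2 * coeff (single 0 (k+1) + single 1 l) φ := by
    intro k l
    have h := congrArg (coeff (single 0 k + single 1 l)) hker
    rw [coeff_sub, coeff_zero, sub_eq_zero,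
      show (2 : MvPolynomial (Fin 2) ℂ) = C (2:ℂ) from (map_ofNat _ 2).symm,
      coeff_C_mul, coeff_pderiv, coeff_pderiv, coeff_pderiv, ssadd, ssadd, ss_apply0,
      ss_apply0, show k+1+1 = k+2 by omega] at h
    push_cast at h
    have hk1 : ((k:ℂ)+1) ≠ 0 := by exact_mod_cast Nat.succ_ne_zero k
    apply mul_left_cancel₀ hk1
    linear_combination h
  have PF : ∀ k l : ℕ, coeff (single 0 (k+1) + single 1 l) φ =
      (((k:ℂ)+2)/2) * coeff (single 0 (k+2) + single 1 l) f := by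
    intro k l
    linear_combination (-(1:ℂ)/2) * key k l
  -- symmetric recursion on the coefficients of f
  have REL : ∀ a b : ℕ, a + b = m + 1 → 1 ≤ a → 1 ≤ b →
      ((a:ℂ)+1) * coeff (single 0 (a+1) + single 1 b) f =
      ((b:ℂ)+1) * coeff (single 0 a + single 1 (b+1)) f := by
    intro a b hab ha hb
    obtain ⟨a', rfl⟩ : ∃ a', a = a' + 1 := ⟨a - 1, by omega⟩
    obtain ⟨b', rfl⟩ : ∃ b', b = b' + 1 := ⟨b - 1, by omega⟩
    have e1 := PF a' (b'+1)
    have e2 := PF b' (a'+1)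
    have e3 := hφc (a'+1) (b'+1)
    rw [e1, e2] at e3
    rw [map_mul, map_div₀] at e3
    simp only [map_add, Complex.conj_natCast, map_ofNat] at e3
    rw [← hfc (a'+1) (b'+2)] at e3
    rw [show a'+1+1 = a'+2 from by omega, show b'+1+1 = b'+2 from by omega]
    push_cast
    linear_combination (2:ℂ) * e3
  -- the inductive claim
  have IND : ∀ j : ℕ, 1 ≤ j → j ≤ m+1 →
      ((m:ℂ)+2) * coeff (single 0 j + single 1 (m+2-j)) f =
      (((m+2).choose j : ℕ) : ℂ) * coeff (single 0 1 + single 1 (m+1)) f := by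
    intro j hj
    induction j, hj using Nat.le_induction with
    | base =>
      intro _
      rw [Nat.choose_one_right]
      rw [show m + 2 - 1 = m + 1 by omega]
      push_cast; ring
    | succ j hj ih =>
      intro hj1
      have hjm : j ≤ m := by omega
      have hrel := REL j (m+1-j) (by omega) hj (by omega)
      have hih := ih (by omega)
      have hcast : ((m+1-j : ℕ) : ℂ) + 1 = ((m+2-j : ℕ) : ℂ) := by
        have : (m+1-j) + 1 = m+2-j := by omega
        rw [← this]; push_cast; ring
      rw [show (m+1-j) + 1 = m+2-j by omega, hcast] at hrel
      have hch : ((j:ℂ)+1) * (((m+2).choose (j+1) : ℕ) : ℂ) =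
          ((m+2-j : ℕ) : ℂ) * (((m+2).choose j : ℕ) : ℂ) := by
        have h2 := congrArg (Nat.cast : ℕ → ℂ) (Nat.choose_succ_right_eq (m+2) j)
        push_cast at h2
        linear_combination h2
      have hj1c : ((j:ℂ)+1) ≠ 0 := by exact_mod_cast Nat.succ_ne_zero j
      apply mul_left_cancel₀ hj1c
      rw [show m+2-(j+1) = m+1-j by omega]
      calc ((j:ℂ)+1) * (((m:ℂ)+2) * coeff (single 0 (j+1) + single 1 (m+1-j)) f)
          = ((m:ℂ)+2) * (((j:ℂ)+1) * coeff (single 0 (j+1) + single 1 (m+1-j)) f) := by ring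
        _ = ((m:ℂ)+2) * (((m+2-j : ℕ) : ℂ) * coeff (single 0 j + single 1 (m+2-j)) f) := by
            rw [hrel]
        _ = ((m+2-j : ℕ) : ℂ) * (((m:ℂ)+2) * coeff (single 0 j + single 1 (m+2-j)) f) := by ring
        _ = ((m+2-j : ℕ) : ℂ) * ((((m+2).choose j : ℕ) : ℂ) * coeff (single 0 1 + single 1 (m+1)) f) := by
            rw [hih]
        _ = ((j:ℂ)+1) * ((((m+2).choose (j+1) : ℕ) : ℂ) * coeff (single 0 1 + single 1 (m+1)) f) := by
            rw [← mul_assoc, ← mul_assoc, ← hch]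
  have hm2 : ((m:ℂ)+2) ≠ 0 := by exact_mod_cast Nat.succ_ne_zero (m+1)
  have hAe : coeff (single 0 (m+1) + single 1 1) f = coeff (single 0 1 + single 1 (m+1)) f := by
    have h := IND (m+1) (by omega) (by omega)
    rw [show m+2-(m+1) = 1 by omega, Nat.choose_succ_self_right] at h
    push_cast at h
    apply mul_left_cancel₀ hm2
    linear_combination h
  have hA0 : coeff (single 0 1 + single 1 (m+1)) f = 0 := by
    have hc := hfc 1 (m+1)
    rw [hAe] at hc
    exact Complex.ext_iff.mpr ⟨by simpa using h1,
      by simpa using Complex.conj_eq_iff_im.mp hc.symm⟩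
  have hFz : ∀ i j, coeff (single 0 i + single 1 j) f = 0 := by
    intro i j
    by_cases hd : i + j = m + 2
    · rcases Nat.eq_zero_or_pos i with rfl | hi
      · rw [show j = m+2 by omega]; exact h0
      · by_cases him : i ≤ m+1
        · have h := IND i hi him
          rw [hA0, mul_zero] at h
          rw [show j = m+2-i by omega]
          exact (mul_eq_zero.mp h).resolve_left hm2
        · rw [show i = m+2 by omega, show j = 0 by omega, hfc (m+2) 0,
            show (0:ℕ) = 0 + 0 by rfl]
          rw [show (single (0:Fin 2) 0 + single 1 (m+2)) = single 0 (0+0) + single 1 (m+2) by simp] at h0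
          rw [h0]
          simp
    · exact hfh.coeff_eq_zero (by rw [degree_ss]; omega)
  have hf0 : f = 0 := by
    refine MvPolynomial.ext _ _ fun d => ?_
    rw [coeff_zero, fin2_decomp d]
    exact hFz _ _
  refine ⟨hf0, ?_⟩
  have hPz : ∀ i j, coeff (single 0 i + single 1 j) φ = 0 := by
    intro i j
    rcases Nat.eq_zero_or_pos i with rfl | hi
    · rw [hφc 0 j]
      rcases Nat.eq_zero_or_pos j with rfl | hj
      · rw [hφh.coeff_eq_zero (by rw [degree_ss]; omega), map_zero]
      · obtain ⟨j', rfl⟩ : ∃ j', j = j'+1 := ⟨j-1, by omega⟩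
        rw [PF j' 0, hf0]
        simp
    · obtain ⟨i', rfl⟩ : ∃ i', i = i'+1 := ⟨i-1, by omega⟩
      rw [PF i' j, hf0]
      simp
  refine MvPolynomial.ext _ _ fun d => ?_
  rw [coeff_zero, fin2_decomp d]
  exact hPz _ _

lemma tm_apply (m : ℕ) (p : HR (m+2) × HR (m+1)) :
    Tm m p = pderiv 0 (pderiv 0 (p.1 : MvPolynomial (Fin 2) ℂ))
      - 2 * pderiv 0 ((p.2 : MvPolynomial (Fin 2) ℂ)) := rfl

lemma two_eq_C : (2 : MvPolynomial (Fin 2) ℂ) = C (2:ℂ) := (map_ofNat _ 2).symm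

noncomputable def E1 (m : ℕ) : LinearMap.ker (Tm m) :=
  ⟨(⟨C 1 * X 1 ^ (m+1+1) + C 1 * X 0 ^ (m+1+1), by
      simpa using mem_HR_pair (m+1+1) 1⟩,
    ⟨C (((m:ℂ)+2)/2) * X 1 ^ (m+1) + C (((m:ℂ)+2)/2) * X 0 ^ (m+1), by
      have h := mem_HR_pair (m+1) (((m:ℂ)+2)/2)
      rwa [show starRingEnd ℂ (((m:ℂ)+2)/2) = ((m:ℂ)+2)/2 by
        simp [map_div₀, map_ofNat]] at h⟩),
   by
    rw [LinearMap.mem_ker, tm_apply]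
    simp only [map_add, pderiv_C_mul, pd_z_pow, pd_w_pow, mul_zero, add_zero, zero_add,
      map_zero, zero_mul, two_eq_C]
    simp only [← smul_eq_C_mul, smul_smul]
    match_scalars
    push_cast
    ring⟩

noncomputable def E2 (m : ℕ) : LinearMap.ker (Tm m) :=
  ⟨(⟨C Complex.I * X 1 ^ (m+1+1) + C (-Complex.I) * X 0 ^ (m+1+1), by
      have h := mem_HR_pair (m+1+1) Complex.I
      rwa [Complex.conj_I] at h⟩,
    ⟨C (Complex.I * (((m:ℂ)+2)/2)) * X 1 ^ (m+1)
        + C (-(Complex.I * (((m:ℂ)+2)/2))) * X 0 ^ (m+1), by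
      have h := mem_HR_pair (m+1) (Complex.I * (((m:ℂ)+2)/2))
      rwa [show starRingEnd ℂ (Complex.I * (((m:ℂ)+2)/2))
          = -(Complex.I * (((m:ℂ)+2)/2)) by
        simp [map_mul, map_div₀, Complex.conj_I, map_ofNat]] at h⟩),
   by
    rw [LinearMap.mem_ker, tm_apply]
    simp only [map_add, pderiv_C_mul, pd_z_pow, pd_w_pow, mul_zero, add_zero, zero_add,
      map_zero, zero_mul, two_eq_C]
    simp only [← smul_eq_C_mul, smul_smul]
    match_scalars
    push_cast
    ring⟩

noncomputable def E3 (m : ℕ) : LinearMap.ker (Tm m) :=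
  ⟨(⟨C ((1:ℝ):ℂ) * (X 0 + X 1) ^ (m+1+1), mem_HR_ps (m+1+1) 1⟩,
    ⟨C (((((m:ℝ)+2)/2 : ℝ)):ℂ) * (X 0 + X 1) ^ (m+1), mem_HR_ps (m+1) _⟩),
   by
    rw [LinearMap.mem_ker, tm_apply]
    simp only [pderiv_C_mul, pd_s_pow, two_eq_C]
    simp only [← smul_eq_C_mul, smul_smul]
    match_scalars
    push_cast
    ring⟩

noncomputable def L (m : ℕ) : (LinearMap.ker (Tm m)) →ₗ[ℝ] ℝ × ℝ × ℝ where
  toFun p := ((coeff (single 0 0 + single 1 (m+2)) ((p : HR (m+2) × HR (m+1)).1 : MvPolynomial (Fin 2) ℂ)).re,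
              (coeff (single 0 0 + single 1 (m+2)) ((p : HR (m+2) × HR (m+1)).1 : MvPolynomial (Fin 2) ℂ)).im,
              (coeff (single 0 1 + single 1 (m+1)) ((p : HR (m+2) × HR (m+1)).1 : MvPolynomial (Fin 2) ℂ)).re)
  map_add' p q := by
    simp [Prod.fst_add, Submodule.coe_add, coeff_add]
  map_smul' r p := by
    simp [Prod.smul_fst, Submodule.coe_smul, coeff_smul, Complex.smul_re, Complex.smul_im]



lemma LE1 (m : ℕ) : L m (E1 m) = (1, 0, 0) := by
  have c1 : coeff (single 0 0 + single 1 (m+2))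
      (((E1 m : LinearMap.ker (Tm m)) : HR (m+2) × HR (m+1)).1 : MvPolynomial (Fin 2) ℂ) = 1 := by
    show coeff _ (C 1 * X 1 ^ (m+1+1) + C 1 * X 0 ^ (m+1+1)) = 1
    rw [coeff_add, coeff_C_mul, coeff_C_mul, coeff_pw, coeff_pz,
      if_pos (show (0:ℕ) = 0 ∧ m+2 = m+1+1 from ⟨rfl, by omega⟩), if_neg (by omega)]
    norm_num
  have c2 : coeff (single 0 1 + single 1 (m+1))
      (((E1 m : LinearMap.ker (Tm m)) : HR (m+2) × HR (m+1)).1 : MvPolynomial (Fin 2) ℂ) = 0 := by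
    show coeff _ (C 1 * X 1 ^ (m+1+1) + C 1 * X 0 ^ (m+1+1)) = 0
    rw [coeff_add, coeff_C_mul, coeff_C_mul, coeff_pw, coeff_pz, if_neg (by omega),
      if_neg (by omega)]
    norm_num
  simp only [L, LinearMap.coe_mk, AddHom.coe_mk]
  rw [c1, c2]
  norm_num

lemma LE2 (m : ℕ) : L m (E2 m) = (0, 1, 0) := by
  have c1 : coeff (single 0 0 + single 1 (m+2))
      (((E2 m : LinearMap.ker (Tm m)) : HR (m+2) × HR (m+1)).1 : MvPolynomial (Fin 2) ℂ) = Complex.I := by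
    show coeff _ (C Complex.I * X 1 ^ (m+1+1) + C (-Complex.I) * X 0 ^ (m+1+1)) = Complex.I
    rw [coeff_add, coeff_C_mul, coeff_C_mul, coeff_pw, coeff_pz,
      if_pos (show (0:ℕ) = 0 ∧ m+2 = m+1+1 from ⟨rfl, by omega⟩), if_neg (by omega)]
    norm_num
  have c2 : coeff (single 0 1 + single 1 (m+1))
      (((E2 m : LinearMap.ker (Tm m)) : HR (m+2) × HR (m+1)).1 : MvPolynomial (Fin 2) ℂ) = 0 := by
    show coeff _ (C Complex.I * X 1 ^ (m+1+1) + C (-Complex.I) * X 0 ^ (m+1+1)) = 0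
    rw [coeff_add, coeff_C_mul, coeff_C_mul, coeff_pw, coeff_pz, if_neg (by omega),
      if_neg (by omega)]
    norm_num
  simp only [L, LinearMap.coe_mk, AddHom.coe_mk]
  rw [c1, c2]
  norm_num

lemma LE3 (m : ℕ) : L m (E3 m) = (1, 0, (m:ℝ)+2) := by
  have c1 : coeff (single 0 0 + single 1 (m+2))
      (((E3 m : LinearMap.ker (Tm m)) : HR (m+2) × HR (m+1)).1 : MvPolynomial (Fin 2) ℂ) = 1 := by
    show coeff _ (C ((1:ℝ):ℂ) * (X 0 + X 1) ^ (m+1+1)) = 1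
    rw [coeff_C_mul, coeff_ps, if_pos (by omega)]
    norm_num
  have c2 : coeff (single 0 1 + single 1 (m+1))
      (((E3 m : LinearMap.ker (Tm m)) : HR (m+2) × HR (m+1)).1 : MvPolynomial (Fin 2) ℂ) = (m:ℂ)+2 := by
    show coeff _ (C ((1:ℝ):ℂ) * (X 0 + X 1) ^ (m+1+1)) = (m:ℂ)+2
    rw [coeff_C_mul, coeff_ps, if_pos (by omega), show m+1+1 = m+2 from rfl,
      Nat.choose_one_right]
    push_cast
    norm_num
  simp only [L, LinearMap.coe_mk, AddHom.coe_mk]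
  rw [c1, c2]
  norm_num

set_option maxHeartbeats 1000000 in
set_option synthInstance.maxHeartbeats 1000000 in
/-- for every `m ≥ 1`, the kernel of the ℝ-linear map
`T_m : H^ℝ_{m+2} × H^ℝ_{m+1} → H_m`, `T_m(f, φ) = D²f − 2Dφ`, has real
dimension exactly `3`. -/
theorem stmt6 (m : ℕ) (hm : 1 ≤ m) :
    Module.finrank ℝ (LinearMap.ker (Tm m)) = 3 := by
  have hker0 : ∀ p, L m p = 0 → p = 0 := by
    rintro ⟨⟨⟨f, hf⟩, ⟨φ, hφ⟩⟩, hker⟩ hL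
    rw [LinearMap.mem_ker] at hker
    have hk : pderiv 0 (pderiv 0 f) - 2 * pderiv 0 φ = 0 := hker
    have h0re := congrArg Prod.fst hL
    have h0im := congrArg (fun v : ℝ × ℝ × ℝ => v.2.1) hL
    have h1re := congrArg (fun v : ℝ × ℝ × ℝ => v.2.2) hL
    simp only [Prod.fst_zero, Prod.snd_zero] at h0re h0im h1re
    have h0 : coeff (single 0 0 + single 1 (m+2)) f = 0 :=
      Complex.ext_iff.mpr ⟨h0re, h0im⟩
    obtain ⟨hf0, hφ0⟩ := inj_aux m f φ hf hφ hk h0 h1re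
    exact Subtype.ext (Prod.ext (Subtype.ext hf0) (Subtype.ext hφ0))
  have hinj : Function.Injective (L m) :=
    fun a b hab => sub_eq_zero.mp (hker0 (a - b) (by have h := (L m).map_sub a b; rw [hab, sub_self] at h; exact h))
  have hsurj : Function.Surjective (L m) := by
    rintro ⟨x, y, t⟩
    have hm2 : ((m:ℝ)+2) ≠ 0 := by positivity
    refine ⟨(x - t/((m:ℝ)+2)) • E1 m + y • E2 m + (t/((m:ℝ)+2)) • E3 m, ?_⟩
    rw [map_add, map_add, map_smul, map_smul, map_smul, LE1, LE2, LE3]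
    simp only [Prod.smul_mk, smul_eq_mul, Prod.mk_add_mk, Prod.mk.injEq]
    refine ⟨by field_simp; ring, by ring_nf, by field_simp; ring⟩
  have e := LinearEquiv.ofBijective (L m) ⟨hinj, hsurj⟩
  rw [e.finrank_eq, Module.finrank_prod, Module.finrank_prod, Module.finrank_self]
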